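/- arXiv:2305.09328 — 2 statements merged into one kernel-verified Lean document; each statement's English description precedes it below -/
import Mathlib

section
/- Let m₃ ∈ ℝ, v₃ > 0 and ω ≥ 0. Then (1/2)·(erf((√ω + m₃)/√(2v₃)) − erf((m₃ − √ω)/√(2v₃))) = (2/√π)·Σ_{n=0}^∞ [(−1)ⁿ/(n!·(2n+1)·(2v₃)^{(2n+1)/2})]·Σ_{k odd, 1≤k≤2n+1} C(2n+1,k)·m₃^{2n+1−k}·ω^{k/2}. -/
open Real Finset

/-- The Gauss error function. -/
noncomputable def erf (z : ℝ) : ℝ :=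
  (2 / Real.sqrt π) * ∫ t in (0:ℝ)..z, Real.exp (-t ^ 2)

/-!
Integrating the Maclaurin series of `exp (-t ^ 2)` term by term (dominated by the series of
`exp (z ^ 2)`) gives `erf z` as a power series in odd powers of `z`. In the difference
`a ^ (2n+1) - b ^ (2n+1)` with `a, b = (m₃ ± √ω) / √(2 v₃)` the even binomial terms cancel, and
`√ω ^ k = ω ^ (k/2)`, `√(2 v₃) ^ (2n+1) = (2 v₃) ^ ((2n+1)/2)` turn it into the stated form.
-/

lemma hasSum_exp_neg_sq (t : ℝ) :
    HasSum (fun n : ℕ => (-1) ^ n * t ^ (2 * n) / n.factorial) (exp (-t ^ 2)) := by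
  have h := NormedSpace.expSeries_div_hasSum_exp (-t ^ 2)
  rw [← Real.exp_eq_exp_ℝ] at h
  refine h.congr_fun fun n => ?_
  rw [neg_pow (t ^ 2), pow_mul]

lemma hasSum_integral_exp_neg_sq (z : ℝ) :
    HasSum (fun n : ℕ => (-1) ^ n / (n.factorial * (2 * n + 1)) * z ^ (2 * n + 1))
      (∫ t in (0:ℝ)..z, exp (-t ^ 2)) := by
  have h_bound (n : ℕ) (t : ℝ) (ht : t ∈ Set.uIoc 0 z) :
      ‖(-1 : ℝ) ^ n * t ^ (2 * n) / n.factorial‖ ≤ |z| ^ (2 * n) / n.factorial := by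
    have htz : |t| ≤ |z| := by
      simpa using Set.abs_sub_left_of_mem_uIcc (Set.uIoc_subset_uIcc ht)
    rw [norm_div, norm_mul, norm_pow, norm_pow, norm_neg, norm_one, one_pow, one_mul,
      Real.norm_natCast, Real.norm_eq_abs]
    gcongr
  have h_summable : Summable fun n : ℕ => |z| ^ (2 * n) / n.factorial := by
    simpa only [pow_mul] using Real.summable_pow_div_factorial (|z| ^ 2)
  have h := intervalIntegral.hasSum_integral_of_dominated_convergence
    (F := fun (n : ℕ) (t : ℝ) => (-1) ^ n * t ^ (2 * n) / n.factorial)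
    (f := fun t => exp (-t ^ 2)) (μ := MeasureTheory.volume)
    (fun n _ => |z| ^ (2 * n) / n.factorial)
    (fun n => Continuous.aestronglyMeasurable (by fun_prop))
    (fun n => .of_forall (h_bound n)) (.of_forall fun _ _ => h_summable)
    intervalIntegrable_const (.of_forall fun t _ => hasSum_exp_neg_sq t)
  refine h.congr_fun fun n => ?_
  rw [intervalIntegral.integral_div, intervalIntegral.integral_const_mul, integral_pow]
  push_cast
  field_simp
  ring

lemma hasSum_erf (z : ℝ) :
    HasSum (fun n : ℕ => 2 / √π * ((-1) ^ n / (n.factorial * (2 * n + 1))) * z ^ (2 * n + 1))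
      (erf z) :=
  ((hasSum_integral_exp_neg_sq z).mul_left (2 / √π)).congr_fun fun _ => mul_assoc _ _ _

lemma add_pow_sub_sub_pow {R : Type*} [CommRing R] (x y : R) (N : ℕ) :
    (x + y) ^ N - (y - x) ^ N =
      2 * ∑ k ∈ (range (N + 1)).filter Odd, (N.choose k : R) * y ^ (N - k) * x ^ k := by
  rw [add_pow, sub_eq_neg_add y x, add_pow, ← sum_sub_distrib, mul_sum, sum_filter]
  refine sum_congr rfl fun k _ => ?_
  rcases Nat.even_or_odd k with hk | hk
  · rw [hk.neg_pow, if_neg (Nat.not_odd_iff_even.mpr hk)]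
    ring
  · rw [hk.neg_pow, if_pos hk]
    ring

lemma div_sqrt_pow_sub_div_sqrt_pow {c ω : ℝ} (hc : 0 ≤ c) (hω : 0 ≤ ω) (m : ℝ) (N : ℕ) :
    ((√ω + m) / √c) ^ N - ((m - √ω) / √c) ^ N =
      2 * (∑ k ∈ (range (N + 1)).filter Odd,
        (N.choose k : ℝ) * m ^ (N - k) * ω ^ ((k : ℝ) / 2)) / c ^ ((N : ℝ) / 2) := by
  simp only [rpow_div_two_eq_sqrt _ hω, rpow_div_two_eq_sqrt _ hc, rpow_natCast]
  rw [div_pow, div_pow, ← sub_div, add_pow_sub_sub_pow]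

theorem erf_difference_series (m₃ v₃ ω : ℝ) (hv : 0 < v₃) (hω : 0 ≤ ω) :
    (1 / 2) * (erf ((Real.sqrt ω + m₃) / Real.sqrt (2 * v₃)) -
        erf ((m₃ - Real.sqrt ω) / Real.sqrt (2 * v₃))) =
      (2 / Real.sqrt π) *
        ∑' n : ℕ, ((-1) ^ n / ((n.factorial : ℝ) * (2 * n + 1) *
            (2 * v₃) ^ (((2 * n + 1 : ℕ) : ℝ) / 2))) *
          ∑ k ∈ (Finset.range (2 * n + 2)).filter (fun k => Odd k),
            (Nat.choose (2 * n + 1) k : ℝ) * m₃ ^ (2 * n + 1 - k) * ω ^ ((k : ℝ) / 2) := by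
  set a := (√ω + m₃) / √(2 * v₃)
  set b := (m₃ - √ω) / √(2 * v₃)
  have h_term (n : ℕ) :
      1 / 2 * (2 / √π * ((-1) ^ n / (n.factorial * (2 * n + 1))) * a ^ (2 * n + 1) -
        2 / √π * ((-1) ^ n / (n.factorial * (2 * n + 1))) * b ^ (2 * n + 1)) =
      2 / √π * ((-1) ^ n / ((n.factorial : ℝ) * (2 * n + 1) *
            (2 * v₃) ^ (((2 * n + 1 : ℕ) : ℝ) / 2)) *
          ∑ k ∈ (range (2 * n + 2)).filter Odd,
            ((2 * n + 1).choose k : ℝ) * m₃ ^ (2 * n + 1 - k) * ω ^ ((k : ℝ) / 2)) := by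
    rw [← mul_sub, div_sqrt_pow_sub_div_sqrt_pow (by positivity) hω]
    field_simp
  rw [← ((hasSum_erf a).sub (hasSum_erf b)).tsum_eq, ← tsum_mul_left, tsum_congr h_term,
    tsum_mul_left]
end

section
/- Under the assumptions of the previous outage reformulation with X = h̃² for h̃ ∼ N(m₃, v₃), the outage probability P = ℙ(log₂(1 + SINR) < R_M) equals (1/2)·(erf((√ω + m₃)/√(2v₃)) − erf((m₃ − √ω)/√(2v₃))) where ω = ε_M·ρ²/((α_M² − α_U²·ε_M)·γ). -/
open Real MeasureTheory ProbabilityTheory NNReal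

/-!
Since `X ↦ X / (a X + b)` is increasing for `b > 0`, the outage event `log₂(1 + SINR) < R_M` is
the event `h̃² < ω`, i.e. `h̃ ∈ (-√ω, √ω)`. The Gaussian mass of an interval is a difference of
error functions (substitute `t = (x - m₃)/√(2v₃)` in the density), and the oddness of `erf`
puts the symmetric interval into the stated form.
-/

open Set

theorem erf_neg (z : ℝ) : erf (-z) = -erf z := by
  have h : ∫ t in (0:ℝ)..(-z), exp (-t ^ 2) = -∫ t in (0:ℝ)..z, exp (-t ^ 2) := by
    have := intervalIntegral.integral_comp_neg (a := z) (b := 0) fun t => exp (-t ^ 2)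
    simp only [neg_sq, neg_zero] at this
    rw [← this, intervalIntegral.integral_symm]
  rw [erf, h, mul_neg, erf]

theorem integral_exp_neg_sq_eq_erf_sub (a b : ℝ) :
    ∫ t in a..b, exp (-t ^ 2) = √π / 2 * (erf b - erf a) := by
  have hint : ∀ c d : ℝ, IntervalIntegrable (fun t => exp (-t ^ 2)) volume c d :=
    fun c d => (by fun_prop : Continuous fun t : ℝ => exp (-t ^ 2)).intervalIntegrable c d
  rw [← intervalIntegral.integral_interval_sub_left (hint 0 b) (hint 0 a), erf, erf]
  have : √π ≠ 0 := (Real.sqrt_pos.mpr Real.pi_pos).ne'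
  field_simp

theorem gaussianPDFReal_eq_exp_neg_sq (m : ℝ) (v : ℝ≥0) (x : ℝ) :
    gaussianPDFReal m v x =
      (√π * √(2 * v))⁻¹ * exp (-(x / √(2 * v) - m / √(2 * v)) ^ 2) := by
  have hs : √(2 * (v : ℝ)) ^ 2 = 2 * v := Real.sq_sqrt (by positivity)
  have hsqrt : √(2 * π * v) = √π * √(2 * v) := by
    rw [← Real.sqrt_mul Real.pi_pos.le]; ring_nf
  rw [gaussianPDFReal, hsqrt, div_sub_div_same, div_pow, hs, neg_div]

theorem gaussianReal_Ioo_toReal (m : ℝ) {v : ℝ≥0} (hv : v ≠ 0) {a b : ℝ} (hab : a ≤ b) :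
    (gaussianReal m v (Ioo a b)).toReal =
      1 / 2 * (erf ((b - m) / √(2 * v)) - erf ((a - m) / √(2 * v))) := by
  have hs0 : √(2 * (v : ℝ)) ≠ 0 := by positivity
  rw [gaussianReal_apply_eq_integral m hv, ENNReal.toReal_ofReal
    (setIntegral_nonneg measurableSet_Ioo fun x _ => gaussianPDFReal_nonneg m v x),
    ← integral_Ioc_eq_integral_Ioo, ← intervalIntegral.integral_of_le hab]
  simp_rw [gaussianPDFReal_eq_exp_neg_sq m v, intervalIntegral.integral_const_mul]
  rw [intervalIntegral.integral_comp_div_sub (fun t => exp (-t ^ 2)) hs0,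
    integral_exp_neg_sq_eq_erf_sub, div_sub_div_same, div_sub_div_same, smul_eq_mul]
  have : √π ≠ 0 := (Real.sqrt_pos.mpr Real.pi_pos).ne'
  field_simp

theorem gaussianReal_Ioo_neg_toReal (m : ℝ) {v : ℝ≥0} (hv : v ≠ 0) {c : ℝ} (hc : 0 ≤ c) :
    (gaussianReal m v (Ioo (-c) c)).toReal =
      1 / 2 * (erf ((c + m) / √(2 * v)) - erf ((m - c) / √(2 * v))) := by
  rw [gaussianReal_Ioo_toReal m hv (by linarith), ← neg_add', neg_div, erf_neg,
    ← neg_sub m, neg_div, erf_neg]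
  ring

theorem logb_one_add_sinr_lt_iff {αM αU γ ρ2 R X : ℝ} (hγ : 0 < γ) (hρ : 0 < ρ2)
    (hfeas : 0 < αM ^ 2 - αU ^ 2 * (2 ^ R - 1)) (hX : 0 ≤ X) :
    logb 2 (1 + αM ^ 2 * X * γ / (αU ^ 2 * X * γ + ρ2)) < R ↔
      X < (2 ^ R - 1) * ρ2 / ((αM ^ 2 - αU ^ 2 * (2 ^ R - 1)) * γ) := by
  have hden : 0 < αU ^ 2 * X * γ + ρ2 := by positivity
  have hpos : 0 < 1 + αM ^ 2 * X * γ / (αU ^ 2 * X * γ + ρ2) := by positivity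
  rw [logb_lt_iff_lt_rpow one_lt_two hpos, ← lt_sub_iff_add_lt', lt_div_iff₀ (by positivity),
    div_lt_iff₀ hden]
  constructor <;> intro h <;> nlinarith

theorem co_inac_outage_probability_general
    {Ω : Type*} [MeasureSpace Ω]
    (αM αU γ ρ2 RM εM m₃ : ℝ) (v₃ : ℝ≥0) (hv : 0 < (v₃ : ℝ))
    (hγ : 0 < γ) (hρ : 0 < ρ2)
    (hεM : εM = 2 ^ RM - 1) (hfeas : αM ^ 2 - αU ^ 2 * εM > 0)
    (htil : Ω → ℝ) (hmeas : Measurable htil)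
    (hlaw : Measure.map htil ℙ = gaussianReal m₃ v₃)
    (ω : ℝ) (hω : ω = εM * ρ2 / ((αM ^ 2 - αU ^ 2 * εM) * γ)) :
    (ℙ {x | Real.logb 2 (1 +
        (αM ^ 2 * (htil x ^ 2) * γ) / (αU ^ 2 * (htil x ^ 2) * γ + ρ2)) < RM}).toReal =
      (1 / 2) * (erf ((Real.sqrt ω + m₃) / Real.sqrt (2 * v₃)) -
        erf ((m₃ - Real.sqrt ω) / Real.sqrt (2 * v₃))) := by
  subst hεM
  have houtage : {x | logb 2 (1 +
        (αM ^ 2 * (htil x ^ 2) * γ) / (αU ^ 2 * (htil x ^ 2) * γ + ρ2)) < RM} =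
      htil ⁻¹' Ioo (-√ω) √ω := by
    ext x
    rw [mem_ofPred_eq, logb_one_add_sinr_lt_iff hγ hρ hfeas (sq_nonneg _), ← hω, Real.sq_lt]
    rfl
  rw [houtage, ← Measure.map_apply hmeas measurableSet_Ioo, hlaw,
    gaussianReal_Ioo_neg_toReal m₃ (by exact_mod_cast hv.ne') (Real.sqrt_nonneg ω)]

theorem co_inac_outage_probability
    {Ω : Type*} [MeasureSpace Ω] [IsProbabilityMeasure (ℙ : Measure Ω)]
    (αM αU γ ρ2 RM εM m₃ : ℝ) (v₃ : ℝ≥0) (hv : 0 < (v₃ : ℝ))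
    (hαM : 0 < αM) (hαU : 0 < αU) (hsum : αM ^ 2 + αU ^ 2 = 1)
    (hγ : 0 < γ) (hρ : 0 < ρ2)
    (hεM : εM = 2 ^ RM - 1) (hfeas : αM ^ 2 - αU ^ 2 * εM > 0)
    (htil : Ω → ℝ) (hmeas : Measurable htil)
    (hlaw : Measure.map htil ℙ = gaussianReal m₃ v₃)
    (ω : ℝ) (hω : ω = εM * ρ2 / ((αM ^ 2 - αU ^ 2 * εM) * γ)) :
    (ℙ {x | Real.logb 2 (1 +
        (αM ^ 2 * (htil x ^ 2) * γ) / (αU ^ 2 * (htil x ^ 2) * γ + ρ2)) < RM}).toReal =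
      (1 / 2) * (erf ((Real.sqrt ω + m₃) / Real.sqrt (2 * v₃)) -
        erf ((m₃ - Real.sqrt ω) / Real.sqrt (2 * v₃))) :=
  co_inac_outage_probability_general αM αU γ ρ2 RM εM m₃ v₃ hv hγ hρ hεM hfeas htil hmeas hlaw ω hω
end
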